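/- If n is a positive multiple of 4 and t = π/4 + π·k/2 for an integer k ≥ 0, then |[exp(-ι·t·H(K_n^-))]_{1,n}| = 1; that is, K_n^- admits perfect state transfer between the two non-adjacent vertices 1 and n at time t. -/

import Mathlib

/-!
With `J = 𝟙 𝟙ᵀ` and `P = u uᵀ` for `u = e_a - e_b`, the Hamiltonian is `c • 1 + 2 • J + 2 • P`.
Since `J * J = n • J`, `P * P = 2 • P` and `J * P = P * J = 0`, the exponential factors as
`exp (-ι t c) • exp (-2 ι t J) * exp (-2 ι t P)`, and the exponential of a multiple of a
(rescaled) idempotent `E` is `1 + (e^λ - 1) • E`. At `t = π/4 + πk/2` with `4 ∣ n`, the phase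
`e^{-2ιtn}` is `1`, so the `J`-factor is trivial, while `e^{-4ιt} = -1` turns the `P`-factor
into the reflection `1 - P`, whose `(a, b)` entry is `1`.
-/

open NormedSpace Matrix

namespace NormedSpace

variable {A : Type*} [Ring A] [Algebra ℂ A] [TopologicalSpace A] [IsTopologicalRing A]
  [ContinuousSMul ℂ A] [T2Space A]

theorem exp_smul_of_isIdempotentElem {e : A} (he : IsIdempotentElem e) (c : ℂ) :
    exp (c • e) = 1 + (Complex.exp c - 1) • e := by
  have hterm (m : ℕ) : ((m.factorial : ℂ)⁻¹) • (c • e) ^ m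
      = (c ^ m / m.factorial) • e + if m = 0 then 1 - e else 0 := by
    cases m with
    | zero => simp
    | succ m => simp [smul_pow, he.pow_succ_eq, smul_smul, div_eq_inv_mul]
  have hsum : HasSum (fun m : ℕ => (c ^ m / m.factorial) • e + if m = 0 then 1 - e else 0)
      (Complex.exp c • e + (1 - e)) := by
    rw [Complex.exp_eq_exp_ℂ]
    exact ((expSeries_div_hasSum_exp c).smul_const e).add (hasSum_ite_eq 0 (1 - e))
  rw [congrFun (exp_eq_tsum ℂ) (c • e), tsum_congr hterm, hsum.tsum_eq, sub_smul, one_smul]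
  abel

theorem exp_smul_of_mul_self_eq_smul {E : A} {d : ℂ} (hd : d ≠ 0) (hE : E * E = d • E)
    (c : ℂ) :
    exp (c • E) = 1 + ((Complex.exp (c * d) - 1) / d) • E := by
  have he : IsIdempotentElem (d⁻¹ • E) := by
    rw [IsIdempotentElem, smul_mul_smul_comm, hE, smul_smul, mul_assoc, inv_mul_cancel₀ hd,
      mul_one]
  have hcE : c • E = (c * d) • (d⁻¹ • E) := by rw [smul_smul, mul_inv_cancel_right₀ hd]
  rw [hcE, exp_smul_of_isIdempotentElem he, smul_smul, div_eq_mul_inv]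

end NormedSpace

namespace Matrix

variable {N R : Type*}

theorem vecMulVec_self_mul_self [Fintype N] [CommRing R] (u : N → R) :
    vecMulVec u u * vecMulVec u u = (u ⬝ᵥ u) • vecMulVec u u := by
  rw [vecMulVec_mul_vecMulVec, vecMulVec_smul]

theorem commute_vecMulVec_self_of_dotProduct_eq_zero [Fintype N] [CommRing R] {v w : N → R}
    (h : v ⬝ᵥ w = 0) : Commute (vecMulVec v v) (vecMulVec w w) := by
  simp [Commute, SemiconjBy, vecMulVec_mul_vecMulVec, h, dotProduct_comm w v]

section

variable [DecidableEq N] [Ring R] {a b : N}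

theorem of_corner_eq_vecMulVec (hab : a ≠ b) :
    (of fun i j => if (i = a ∧ j = a) ∨ (i = b ∧ j = b) then 1
      else if (i = a ∧ j = b) ∨ (i = b ∧ j = a) then -1 else 0 : Matrix N N R)
      = vecMulVec (Pi.single a 1 - Pi.single b 1) (Pi.single a 1 - Pi.single b 1) := by
  ext i j
  simp only [of_apply, vecMulVec_apply, Pi.sub_apply, Pi.single_apply]
  split_ifs <;> simp_all

variable [Fintype N]

theorem single_sub_single_dotProduct_self (hab : a ≠ b) :
    (Pi.single a 1 - Pi.single b 1 : N → R) ⬝ᵥ (Pi.single a 1 - Pi.single b 1) = 2 := by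
  simp [dotProduct_sub, hab, hab.symm]
  norm_num

theorem one_dotProduct_single_sub_single (a b : N) :
    (1 : N → R) ⬝ᵥ (Pi.single a 1 - Pi.single b 1) = 0 := by
  simp [dotProduct_sub]

end

variable [Fintype N] [DecidableEq N]

theorem exp_smul_one_add (s : ℂ) (X : Matrix N N ℂ) :
    exp (s • 1 + X) = Complex.exp s • exp X := by
  rw [Matrix.exp_add_of_commute _ _ ((Commute.one_left X).smul_left s),
    exp_smul_of_isIdempotentElem .one, sub_smul, one_smul, add_sub_cancel, smul_mul, one_mul]

theorem exp_smul_vecMulVec_self {u : N → ℂ} (hu : u ⬝ᵥ u ≠ 0) (c : ℂ) :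
    exp (c • vecMulVec u u)
      = 1 + ((Complex.exp (c * (u ⬝ᵥ u)) - 1) / (u ⬝ᵥ u)) • vecMulVec u u :=
  exp_smul_of_mul_self_eq_smul hu (vecMulVec_self_mul_self u) c

theorem exp_smul_vecMulVec_self_of_exp_eq_one {u : N → ℂ} (hu : u ⬝ᵥ u ≠ 0) {c : ℂ}
    (hc : Complex.exp (c * (u ⬝ᵥ u)) = 1) : exp (c • vecMulVec u u) = 1 := by
  rw [exp_smul_vecMulVec_self hu, hc, sub_self, zero_div, zero_smul, add_zero]

theorem exp_smul_vecMulVec_self_of_exp_eq_neg_one {u : N → ℂ} (hu : u ⬝ᵥ u = 2) {c : ℂ}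
    (hc : Complex.exp (c * 2) = -1) : exp (c • vecMulVec u u) = 1 - vecMulVec u u := by
  rw [exp_smul_vecMulVec_self (by simp [hu]), hu, hc]
  norm_num [sub_eq_add_neg]

end Matrix

section

open Complex

variable {k : ℕ} {t : ℝ}

theorem exp_neg_two_mul_I_mul_mul_four_mul_eq_one (ht : t = Real.pi / 4 + Real.pi * k / 2)
    (m : ℕ) : cexp (-(2 * I * t) * (4 * m)) = 1 := by
  rw [← exp_int_mul_two_pi_mul_I (-(m * (2 * k + 1))), ht]
  push_cast
  ring_nf

theorem exp_neg_two_mul_I_mul_mul_two_eq_neg_one (ht : t = Real.pi / 4 + Real.pi * k / 2) :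
    cexp (-(2 * I * t) * 2) = -1 := by
  rw [← mul_one (-1 : ℂ), ← exp_pi_mul_I, ← exp_int_mul_two_pi_mul_I (-(k + 1)),
    ← Complex.exp_add, ht]
  push_cast
  ring_nf

end

open Complex in
theorem complete_minus_edge_pst_general (n : ℕ) (hmod : n % 4 = 0)
    (k : ℕ) (t : ℝ) (ht : t = Real.pi / 4 + Real.pi * k / 2)
    (a b : Fin n) (ha : (a : ℕ) = 0) (hb : (b : ℕ) = n - 1)
    (P : Matrix (Fin n) (Fin n) ℂ)
    (hP : P = Matrix.of fun i j =>
      if (i = a ∧ j = a) ∨ (i = b ∧ j = b) then 1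
      else if (i = a ∧ j = b) ∨ (i = b ∧ j = a) then -1 else 0)
    (H : Matrix (Fin n) (Fin n) ℂ)
    (hH : H = (n * (n - 1) / 2 - 1 : ℂ) • (1 : Matrix (Fin n) (Fin n) ℂ)
        - 2 • ((n : ℂ) • (1 : Matrix (Fin n) (Fin n) ℂ)
            - (Matrix.of fun _ _ : Fin n => (1 : ℂ)) - P)) :
    ‖NormedSpace.exp ((-(Complex.I * t)) • H) a b‖ = 1 := by
  have hab : a ≠ b := Fin.ne_of_val_ne (by omega)
  obtain ⟨m, rfl⟩ : ∃ m, n = 4 * m := ⟨n / 4, by omega⟩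
  set u : Fin (4 * m) → ℂ := Pi.single a 1 - Pi.single b 1
  set ones : Fin (4 * m) → ℂ := 1
  have hdecomp : (-(I * t)) • H = (-(I * t) * ((4 * m) * (4 * m - 1) / 2 - 1 - 2 * (4 * m))) • 1
      + ((-(2 * I * t)) • vecMulVec ones ones + (-(2 * I * t)) • vecMulVec u u) := by
    rw [hH, hP.trans (of_corner_eq_vecMulVec hab)]
    ext i j
    simp only [Matrix.smul_apply, Matrix.sub_apply, Matrix.add_apply, one_apply, of_apply,
      vecMulVec_apply, Pi.one_apply, smul_eq_mul, ones]
    split_ifs <;> push_cast <;> ring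
  rw [hdecomp, exp_smul_one_add, Matrix.exp_add_of_commute,
    exp_smul_vecMulVec_self_of_exp_eq_one (by simp [ones]; omega) (by
      simpa [ones] using exp_neg_two_mul_I_mul_mul_four_mul_eq_one ht m),
    exp_smul_vecMulVec_self_of_exp_eq_neg_one (single_sub_single_dotProduct_self hab)
      (exp_neg_two_mul_I_mul_mul_two_eq_neg_one ht)]
  · simp [vecMulVec_apply, hab, hab.symm, Complex.norm_exp]
  · exact ((commute_vecMulVec_self_of_dotProduct_eq_zero
      (one_dotProduct_single_sub_single a b)).smul_left _).smul_right _

/-- If `n` is a positive multiple of 4 and `t = π/4 + πk/2` (integer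
`k ≥ 0`), then `|[exp(-ιtH(K_n^-))]_{a,b}| = 1`: perfect state transfer between the two
non-adjacent vertices of the complete graph minus an edge. -/
theorem complete_minus_edge_pst (n : ℕ) (hn : 4 ≤ n) (hmod : n % 4 = 0)
    (k : ℕ) (t : ℝ) (ht : t = Real.pi / 4 + Real.pi * k / 2)
    (a b : Fin n) (ha : (a : ℕ) = 0) (hb : (b : ℕ) = n - 1)
    (P : Matrix (Fin n) (Fin n) ℂ)
    (hP : P = Matrix.of fun i j =>
      if (i = a ∧ j = a) ∨ (i = b ∧ j = b) then 1
      else if (i = a ∧ j = b) ∨ (i = b ∧ j = a) then -1 else 0)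
    (H : Matrix (Fin n) (Fin n) ℂ)
    (hH : H = (n * (n - 1) / 2 - 1 : ℂ) • (1 : Matrix (Fin n) (Fin n) ℂ)
        - 2 • ((n : ℂ) • (1 : Matrix (Fin n) (Fin n) ℂ)
            - (Matrix.of fun _ _ : Fin n => (1 : ℂ)) - P)) :
    ‖NormedSpace.exp ((-(Complex.I * t)) • H) a b‖ = 1 :=
  complete_minus_edge_pst_general n hmod k t ht a b ha hb P hP H hH
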